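/- arXiv:1708.09558 — 2 statements merged into one kernel-verified Lean document; each statement's English description precedes it below -/
import Mathlib

section
/- Let n ≥ 1, let Q = Set.Icc (0 : Fin n → ℝ) 1 be the unit n-cube with its subspace topology, let c be a Čech closure operator on a set Y with interior cover 𝒞, and let f : Q → Y be continuous, i.e. f '' (closure A) ⊆ c (f '' A) for every A ⊆ Q. Then there exists a positive integer k such that for every index vector z : Fin n → Fin k there exists V ∈ 𝒞 with f x ∈ V for every x ∈ Q satisfying (z i : ℝ)/k ≤ x i ≤ ((z i : ℝ) + 1)/k for every i : Fin n; that is, f maps each closed subcube of side length 1/k of the decomposition into some member of 𝒞. -/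
/-! Čech continuity of `f` makes `f ⁻¹' V` a neighbourhood of every point `x` such that `V` is a
neighbourhood of `f x`. The interiors of the preimages of the members of `𝒞` thus form an open
cover of the compact cube, and every subcube of side `1 / k` smaller than a Lebesgue number of this
cover lies in one of them. -/

open Set

/-- A Čech closure operator on a set `Y`. -/
def IsCechClosure {Y : Type*} (c : Set Y → Set Y) : Prop :=
  c ∅ = ∅ ∧ (∀ A : Set Y, A ⊆ c A) ∧ ∀ A B : Set Y, c (A ∪ B) = c A ∪ c B

open Metric Topology

theorem monotone_of_map_union {Y : Type*} {c : Set Y → Set Y}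
    (hc : ∀ A B : Set Y, c (A ∪ B) = c A ∪ c B) : Monotone c := fun A B hAB =>
  calc c A ⊆ c A ∪ c B := subset_union_left
    _ = c B := by rw [← hc, union_eq_self_of_subset_left hAB]

theorem preimage_mem_nhds_of_notMem_cechClosure {X Y : Type*} [TopologicalSpace X]
    {c : Set Y → Set Y} (hc : Monotone c) {f : X → Y}
    (hf : ∀ A : Set X, f '' closure A ⊆ c (f '' A)) {x : X} {V : Set Y}
    (hV : f x ∉ c (univ \ V)) : f ⁻¹' V ∈ 𝓝 x := by
  rw [← mem_interior_iff_mem_nhds, interior_eq_compl_closure_compl]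
  intro hx
  exact hV (hc (by rw [← compl_eq_univ_sdiff]; exact image_preimage_subset f Vᶜ)
    (hf _ (mem_image_of_mem f hx)))

theorem exists_pos_forall_ball_subset_preimage_of_cechClosure {X Y : Type*}
    [PseudoMetricSpace X] [CompactSpace X] {c : Set Y → Set Y} (hc : Monotone c)
    {𝒞 : Set (Set Y)} (hcov : ∀ y : Y, ∃ V ∈ 𝒞, y ∉ c (univ \ V)) {f : X → Y}
    (hf : ∀ A : Set X, f '' closure A ⊆ c (f '' A)) :
    ∃ δ > 0, ∀ x : X, ∃ V ∈ 𝒞, ball x δ ⊆ f ⁻¹' V := by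
  have hcover : univ ⊆ ⋃ V : 𝒞, interior (f ⁻¹' V) := fun x _ => by
    obtain ⟨V, hV𝒞, hV⟩ := hcov (f x)
    exact mem_iUnion.2 ⟨⟨V, hV𝒞⟩, mem_interior_iff_mem_nhds.2
      (preimage_mem_nhds_of_notMem_cechClosure hc hf hV)⟩
  obtain ⟨δ, hδ, hball⟩ :=
    lebesgue_number_lemma_of_metric isCompact_univ (fun _ => isOpen_interior) hcover
  refine ⟨δ, hδ, fun x => ?_⟩
  obtain ⟨V, hV⟩ := hball x trivial
  exact ⟨V, V.2, hV.trans interior_subset⟩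

theorem dist_le_of_forall_mem_Icc_add {ι : Type*} [Fintype ι] {x a : ι → ℝ} {r : ℝ}
    (hr : 0 ≤ r) (hx : ∀ i, x i ∈ Icc (a i) (a i + r)) : dist x a ≤ r :=
  (dist_pi_le_iff hr).2 fun i => by
    simpa using Real.dist_le_of_mem_Icc (hx i) (left_mem_Icc.2 (le_add_of_nonneg_right hr))

theorem Fin.cast_div_mem_Icc {k : ℕ} (j : Fin k) : (j : ℝ) / k ∈ Icc (0 : ℝ) 1 :=
  ⟨by positivity, div_le_one_of_le₀ (by exact_mod_cast j.is_lt.le) (Nat.cast_nonneg k)⟩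

theorem lebesgue_lemma_cubes_general {Y : Type*} (n : ℕ)
    (c : Set Y → Set Y) (hc : IsCechClosure c)
    (𝒞 : Set (Set Y)) (hcov : ∀ y : Y, ∃ V ∈ 𝒞, y ∉ c (univ \ V))
    (f : (Set.Icc (0 : Fin n → ℝ) 1) → Y)
    (hf : ∀ A : Set (Set.Icc (0 : Fin n → ℝ) 1), f '' closure A ⊆ c (f '' A)) :
    ∃ k : ℕ, 0 < k ∧ ∀ z : Fin n → Fin k, ∃ V ∈ 𝒞,
      ∀ x : Set.Icc (0 : Fin n → ℝ) 1,
        (∀ i : Fin n, (z i : ℝ) / k ≤ (x : Fin n → ℝ) i ∧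
          (x : Fin n → ℝ) i ≤ ((z i : ℝ) + 1) / k) →
        f x ∈ V := by
  have : CompactSpace (Icc (0 : Fin n → ℝ) 1) := isCompact_iff_compactSpace.1 isCompact_Icc
  obtain ⟨δ, hδ, hball⟩ :=
    exists_pos_forall_ball_subset_preimage_of_cechClosure (monotone_of_map_union hc.2.2) hcov hf
  obtain ⟨k, hk⟩ := exists_nat_one_div_lt hδ
  refine ⟨k + 1, k.succ_pos, fun z => ?_⟩
  let corner : Icc (0 : Fin n → ℝ) 1 :=
    ⟨fun i => (z i : ℝ) / (k + 1 : ℕ), fun i => (z i).cast_div_mem_Icc.1,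
      fun i => (z i).cast_div_mem_Icc.2⟩
  obtain ⟨V, hV𝒞, hV⟩ := hball corner
  refine ⟨V, hV𝒞, fun x hx => hV ?_⟩
  have hdist : dist x corner ≤ 1 / (k + 1 : ℕ) := by
    rw [Subtype.dist_eq]
    refine dist_le_of_forall_mem_Icc_add (by positivity) fun i => ?_
    exact mem_Icc.2 (by simpa only [add_div] using hx i)
  exact lt_of_le_of_lt hdist (by exact_mod_cast hk)

theorem lebesgue_lemma_cubes {Y : Type*} (n : ℕ) (hn : 1 ≤ n)
    (c : Set Y → Set Y) (hc : IsCechClosure c)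
    (𝒞 : Set (Set Y)) (hcov : ∀ y : Y, ∃ V ∈ 𝒞, y ∉ c (univ \ V))
    (f : (Set.Icc (0 : Fin n → ℝ) 1) → Y)
    (hf : ∀ A : Set (Set.Icc (0 : Fin n → ℝ) 1), f '' closure A ⊆ c (f '' A)) :
    ∃ k : ℕ, 0 < k ∧ ∀ z : Fin n → Fin k, ∃ V ∈ 𝒞,
      ∀ x : Set.Icc (0 : Fin n → ℝ) 1,
        (∀ i : Fin n, (z i : ℝ) / k ≤ (x : Fin n → ℝ) i ∧
          (x : Fin n → ℝ) i ≤ ((z i : ℝ) + 1) / k) →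
        f x ∈ V :=
  lebesgue_lemma_cubes_general n c hc 𝒞 hcov f hf
end

section
/- Let c be a Čech closure operator on a set Y and let f, g, h : unitInterval → Y be continuous paths (each path p satisfies p '' (closure A) ⊆ c (p '' A) for every A ⊆ unitInterval) with f 1 = g 0 and g 1 = h 0. Then (f ⋆ g) ⋆ h is homotopic rel ∂I to f ⋆ (g ⋆ h): there exists H : unitInterval × unitInterval → Y, continuous from the product topology (H '' (closure A) ⊆ c (H '' A) for every A ⊆ unitInterval × unitInterval), such that H (s, 0) = ((f ⋆ g) ⋆ h) s and H (s, 1) = (f ⋆ (g ⋆ h)) s for all s, and H (0, t) = f 0 and H (1, t) = h 1 for all t. -/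
open Set unitInterval

/-- The concatenation `f ⋆ g` of two paths in a closure space. -/
noncomputable def pathConcat {Y : Type*} (f g : unitInterval → Y) : unitInterval → Y :=
  fun t =>
    if h : (t : ℝ) ≤ 1 / 2 then
      f ⟨2 * (t : ℝ), by constructor <;> [linarith [t.2.1]; linarith]⟩
    else
      g ⟨2 * (t : ℝ) - 1, by constructor <;> [linarith [not_le.mp h]; linarith [t.2.2]]⟩

/-
`(f ⋆ g) ⋆ h` is `f ⋆ (g ⋆ h)` reparametrised by a piecewise linear `ρ : I → I` fixing `0` and `1`,
so `f ⋆ (g ⋆ h)` composed with the straight-line homotopy from `ρ` to `id` in `I` is the required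
homotopy. It is continuous into `(Y, c)` because continuity into a closure space survives
precomposition with continuous maps, and a concatenation is continuous by pasting along the closed
halves `[0, 1/2]` and `[1/2, 1]`, since `c (A ∪ B) = c A ∪ c B`.
-/

section CechContinuity

variable {X Y : Type*} {c : Set Y → Set Y}

theorem IsCechClosure.monotone (hc : IsCechClosure c) : Monotone c := fun A B hAB => by
  rw [← union_eq_right.mpr hAB, hc.2.2]
  exact subset_union_left

def IsCechContinuous [TopologicalSpace X] (c : Set Y → Set Y) (p : X → Y) : Prop :=
  ∀ A : Set X, p '' closure A ⊆ c (p '' A)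

namespace IsCechContinuous

variable [TopologicalSpace X]

theorem comp_continuous {Z : Type*} [TopologicalSpace Z] {p : X → Y} (hp : IsCechContinuous c p)
    {φ : Z → X} (hφ : Continuous φ) : IsCechContinuous c (p ∘ φ) := fun A => by
  rw [image_comp, image_comp]
  exact (image_mono (image_closure_subset_closure_image hφ)).trans (hp _)

theorem image_closure_inter_subset (hc : IsCechClosure c) {p q : X → Y} {F : Set X}
    (hF : IsClosed F) (hq : IsCechContinuous c q) (hpq : EqOn p q F) (A : Set X) :
    p '' closure (A ∩ F) ⊆ c (p '' A) :=
  calc p '' closure (A ∩ F) = q '' closure (A ∩ F) :=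
        (hpq.mono (closure_minimal inter_subset_right hF)).image_eq
    _ ⊆ c (q '' (A ∩ F)) := hq _
    _ = c (p '' (A ∩ F)) := by rw [(hpq.mono inter_subset_right).image_eq]
    _ ⊆ c (p '' A) := hc.monotone (image_mono inter_subset_left)

theorem of_eqOn_of_isClosed (hc : IsCechClosure c) {p q₁ q₂ : X → Y} {F₁ F₂ : Set X}
    (hF₁ : IsClosed F₁) (hF₂ : IsClosed F₂) (hcover : F₁ ∪ F₂ = univ)
    (hq₁ : IsCechContinuous c q₁) (hq₂ : IsCechContinuous c q₂)
    (hpq₁ : EqOn p q₁ F₁) (hpq₂ : EqOn p q₂ F₂) : IsCechContinuous c p := fun A => by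
  have hA : A = A ∩ F₁ ∪ A ∩ F₂ := by rw [← inter_union_distrib_left, hcover, inter_univ]
  rw [hA, closure_union, image_union, ← hA]
  exact union_subset (image_closure_inter_subset hc hF₁ hq₁ hpq₁ A)
    (image_closure_inter_subset hc hF₂ hq₂ hpq₂ A)

theorem exists_homotopy_reparam {Q : I → Y} (hQ : IsCechContinuous c Q) {ρ : I → I}
    (hρ : Continuous ρ) (hρ₀ : ρ 0 = 0) (hρ₁ : ρ 1 = 1) :
    ∃ H : I × I → Y, IsCechContinuous c H ∧ (∀ s, H (s, 0) = Q (ρ s)) ∧ (∀ s, H (s, 1) = Q s) ∧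
      (∀ t, H (0, t) = Q 0) ∧ (∀ t, H (1, t) = Q 1) := by
  let G := (Path.Homotopy.reparam Path.id ρ hρ hρ₀ hρ₁).symm
  refine ⟨Q ∘ G ∘ Prod.swap, hQ.comp_continuous (G.continuous.comp continuous_swap),
    fun s => ?_, fun s => ?_, fun t => ?_, fun t => ?_⟩ <;> simp [G]

end IsCechContinuous

theorem Path.coe_trans [TopologicalSpace Y] {x y z : Y} (γ : Path x y) (γ' : Path y z) :
    ⇑(γ.trans γ') = pathConcat γ γ' := by
  ext t
  rw [Path.trans_apply]
  rfl

variable {f g h : I → Y}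

theorem pathConcat_of_le_half {t : I} (ht : (t : ℝ) ≤ 1 / 2) :
    pathConcat f g t = f (projIcc 0 1 zero_le_one (2 * t)) := by
  rw [pathConcat, dif_pos ht, projIcc_of_mem _ ((mul_pos_mem_iff zero_lt_two).2 ⟨t.2.1, ht⟩)]

theorem pathConcat_of_half_le (hfg : f 1 = g 0) {t : I} (ht : 1 / 2 ≤ (t : ℝ)) :
    pathConcat f g t = g (projIcc 0 1 zero_le_one (2 * t - 1)) := by
  rcases ht.eq_or_lt with ht | ht
  · rw [pathConcat_of_le_half ht.ge, ← ht]
    norm_num [hfg]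
  · rw [pathConcat, dif_neg (not_le.mpr ht),
      projIcc_of_mem _ (two_mul_sub_one_mem_iff.2 ⟨ht.le, t.2.2⟩)]

@[simp]
theorem pathConcat_zero : pathConcat f g 0 = f 0 := by
  rw [pathConcat_of_le_half (by norm_num)]
  norm_num

@[simp]
theorem pathConcat_one (hfg : f 1 = g 0) : pathConcat f g 1 = g 1 := by
  rw [pathConcat_of_half_le hfg (by norm_num)]
  norm_num

theorem IsCechContinuous.pathConcat (hc : IsCechClosure c) (hf : IsCechContinuous c f)
    (hg : IsCechContinuous c g) (hfg : f 1 = g 0) : IsCechContinuous c (pathConcat f g) :=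
  .of_eqOn_of_isClosed hc (isClosed_le continuous_subtype_val continuous_const)
    (isClosed_le continuous_const continuous_subtype_val)
    (by ext t; simpa using le_total (t : ℝ) (1 / 2))
    (hf.comp_continuous (by fun_prop)) (hg.comp_continuous (by fun_prop))
    (fun _ ht => pathConcat_of_le_half ht) (fun _ ht => pathConcat_of_half_le hfg ht)

theorem pathConcat_assoc_reparam (hfg : f 1 = g 0) (hgh : g 1 = h 0) :
    pathConcat (pathConcat f g) h = pathConcat f (pathConcat g h) ∘ fun t =>
      ⟨Path.Homotopy.transAssocReparamAux t, Path.Homotopy.transAssocReparamAux_mem_I t⟩ := by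
  -- with the indiscrete topology every map `I → Y` is a path
  let _ : TopologicalSpace Y := ⊤
  let pf : Path (f 0) (f 1) := ⟨⟨f, continuous_top⟩, rfl, rfl⟩
  let pg : Path (f 1) (g 1) := ⟨⟨g, continuous_top⟩, hfg.symm, rfl⟩
  let ph : Path (g 1) (h 1) := ⟨⟨h, continuous_top⟩, hgh.symm, rfl⟩
  have hassoc := congrArg (⇑) (Path.Homotopy.trans_assoc_reparam pf pg ph)
  simp only [Path.coe_reparam, Path.coe_trans] at hassoc
  exact hassoc

end CechContinuity

theorem concat_assoc_homotopic {Y : Type*} (c : Set Y → Set Y) (hc : IsCechClosure c)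
    (f g h : unitInterval → Y)
    (hf : ∀ A : Set unitInterval, f '' closure A ⊆ c (f '' A))
    (hg : ∀ A : Set unitInterval, g '' closure A ⊆ c (g '' A))
    (hh : ∀ A : Set unitInterval, h '' closure A ⊆ c (h '' A))
    (hfg : f 1 = g 0) (hgh : g 1 = h 0) :
    ∃ H : unitInterval × unitInterval → Y,
      (∀ A : Set (unitInterval × unitInterval), H '' closure A ⊆ c (H '' A)) ∧
      (∀ s : unitInterval, H (s, 0) = pathConcat (pathConcat f g) h s) ∧
      (∀ s : unitInterval, H (s, 1) = pathConcat f (pathConcat g h) s) ∧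
      (∀ t : unitInterval, H (0, t) = f 0) ∧
      (∀ t : unitInterval, H (1, t) = h 1) := by
  have hfgh : f 1 = pathConcat g h 0 := by rw [pathConcat_zero, hfg]
  have hQ : IsCechContinuous c (pathConcat f (pathConcat g h)) :=
    .pathConcat hc hf (.pathConcat hc hg hh hgh) hfgh
  obtain ⟨H, hH, hH₀, hH₁, hH_left, hH_right⟩ := hQ.exists_homotopy_reparam
    (ρ := fun t => ⟨_, Path.Homotopy.transAssocReparamAux_mem_I t⟩) (by fun_prop)
    (Subtype.ext Path.Homotopy.transAssocReparamAux_zero)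
    (Subtype.ext Path.Homotopy.transAssocReparamAux_one)
  refine ⟨H, hH, fun s => ?_, hH₁, fun t => ?_, fun t => ?_⟩
  · rw [hH₀, pathConcat_assoc_reparam hfg hgh]
    rfl
  · rw [hH_left, pathConcat_zero]
  · rw [hH_right, pathConcat_one hfgh, pathConcat_one hgh]
end
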